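/- If the ladder move L_{i,j} is defined on a skew pipe dream D ∈ SPD_n and L_{i,j}(D) = D ∪ {(p,q+1)} ∖ {(i,j)}, then the inverse ladder move L⁻¹_{p,q+1} is defined on L_{i,j}(D) and L⁻¹_{p,q+1}(L_{i,j}(D)) = D. -/

import Mathlib

open scoped Classical

/-! ## The type `Cₙ` Weyl group as signed permutations of `ℤ` -/

/-- The simple reflections `s₁, …, sₙ` of the type `Cₙ` Weyl group, acting on `ℤ`:
`s₁ = (1 -1)` and `s_k = (k-1 k)(-(k-1) -k)` for `k ≥ 2`. -/
def sC (k : ℕ) : ℤ → ℤ := fun x =>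
  if k = 1 then (if x = 1 then -1 else if x = -1 then 1 else x)
  else
    if x = (k : ℤ) then (k : ℤ) - 1
    else if x = (k : ℤ) - 1 then (k : ℤ)
    else if x = -(k : ℤ) then -((k : ℤ) - 1)
    else if x = -((k : ℤ) - 1) then -(k : ℤ) else x

/-- A signed permutation of `{±1, …, ±n}`: a bijection of `ℤ` commuting with negation and
fixing every integer of absolute value `> n`. -/
def IsSignedPerm (n : ℕ) (w : ℤ → ℤ) : Prop :=
  Function.Bijective w ∧ (∀ x : ℤ, w (-x) = -(w x)) ∧ ∀ x : ℤ, n < x.natAbs → w x = x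

/-- The product `s_{i₁} s_{i₂} ⋯ s_{i_r}` of the word `l = [i₁, …, i_r]`
(applied to `ℤ` on the left, so `s_{i_r}` acts first). -/
def wordProd (l : List ℕ) : ℤ → ℤ := (l.map sC).foldr (· ∘ ·) id

/-- The length `ℓ(w)`: the minimal number of simple reflections `s₁, …, sₙ` needed
to express `w`. -/
noncomputable def lenC (n : ℕ) (w : ℤ → ℤ) : ℕ :=
  sInf {r | ∃ l : List ℕ, l.length = r ∧ (∀ k ∈ l, 1 ≤ k ∧ k ≤ n) ∧ wordProd l = w}

/-- `l` is a reduced word for `w` in the type `Cₙ` Weyl group. -/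
def IsReducedWordC (n : ℕ) (w : ℤ → ℤ) (l : List ℕ) : Prop :=
  (∀ k ∈ l, 1 ≤ k ∧ k ≤ n) ∧ wordProd l = w ∧ l.length = lenC n w

/-- The longest element `w₀ = (1 -1)(2 -2)⋯(n -n)`. -/
def w0C (n : ℕ) : ℤ → ℤ := fun x => if x.natAbs ≤ n then -x else x

/-- The block `(m, m-1, …, 2, 1, 2, …, m-1, m)` of length `2m-1`. -/
def cBlock (m : ℕ) : List ℕ :=
  ((List.range m).map (fun t => m - t)) ++ ((List.range (m - 1)).map (fun t => t + 2))

/-- The reduced word `i_C = (1, 2,1,2, 3,2,1,2,3, …, n,…,1,…,n)` for `w₀`, of length `n²`. -/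
def iC (n : ℕ) : List ℕ := ((List.range n).map (fun k => cBlock (k + 1))).flatten

/-- `m̂(w, i)`: the number of `j ∈ {±1,…,±n}` with `-(n-i+1) ≤ j < n-i+1` and
`w⁻¹(j) < w⁻¹(n-i+1)`. -/
noncomputable def mHat (n : ℕ) (w : ℤ → ℤ) (i : ℕ) : ℕ :=
  ((Finset.Icc (-(n : ℤ)) (n : ℤ)).filter fun j =>
      j ≠ 0 ∧ -((n : ℤ) - (i : ℤ) + 1) ≤ j ∧ j < (n : ℤ) - (i : ℤ) + 1 ∧
        Function.invFun w j < Function.invFun w ((n : ℤ) - (i : ℤ) + 1)).card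

/-! ## The shifted staircase `SY n` and ladder moves -/

/-- The shifted staircase `SY_n = {(i,j) : 1 ≤ i ≤ n, i ≤ j ≤ 2n-i}`. -/
def SY (n : ℕ) : Finset (ℕ × ℕ) :=
  (Finset.Icc 1 n ×ˢ Finset.Icc 1 (2 * n)).filter fun b => b.1 ≤ b.2 ∧ b.1 + b.2 ≤ 2 * n

/-- `idxLt a b` : the box `a` comes strictly before `b` in the enumeration
`((n,n), (n-1,n+1), (n-1,n), …, (1,2), (1,1))` of `SY_n`
(rows from bottom to top, and each row from right to left). -/
def idxLt (a b : ℕ × ℕ) : Prop := b.1 < a.1 ∨ (b.1 = a.1 ∧ b.2 < a.2)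

/-- The symplectic ladder move `L_{rem}` is defined on `D` removing the box `rem` and adding
the box `(add.1, add.2 + 1)`. -/
def LadderMovable (n : ℕ) (D : Finset (ℕ × ℕ)) (rem add : ℕ × ℕ) : Prop :=
  rem ∈ D ∧ (rem.1, rem.2 + 1) ∉ D ∧
  add ∈ SY n ∧ (add.1, add.2 + 1) ∈ SY n ∧ add ∉ D ∧ (add.1, add.2 + 1) ∉ D ∧
  idxLt rem add ∧ (add.2 = rem.2 ∨ add.2 = 2 * n - rem.2) ∧
  ∀ r ∈ SY n, idxLt rem r → idxLt r add → (r.2 = rem.2 ∨ r.2 = 2 * n - rem.2) →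
    r ∈ D ∧ (r.1, r.2 + 1) ∈ D

/-- The result `D ∪ {(add.1, add.2+1)} ∖ {rem}` of a ladder move. -/
def ladderResult (D : Finset (ℕ × ℕ)) (rem add : ℕ × ℕ) : Finset (ℕ × ℕ) :=
  insert (add.1, add.2 + 1) (D.erase rem)

/-- The inverse symplectic ladder move `L⁻¹_{rem}` is defined on `D`, removing the box `rem`
and adding the box `add`. -/
def InvLadderMovable (n : ℕ) (D : Finset (ℕ × ℕ)) (rem add : ℕ × ℕ) : Prop :=
  rem ∈ D ∧ (rem.1, rem.2 - 1) ∉ D ∧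
  add ∈ SY n ∧ add ∉ D ∧ (add.1, add.2 + 1) ∉ D ∧
  idxLt add rem ∧ (add.2 = rem.2 - 1 ∨ add.2 = 2 * n - rem.2 + 1) ∧
  ∀ r ∈ SY n, idxLt add r → idxLt r rem → (r.2 = rem.2 - 1 ∨ r.2 = 2 * n - rem.2 + 1) →
    r ∈ D ∧ (r.1, r.2 + 1) ∈ D

/-- The result `D ∪ {add} ∖ {rem}` of an inverse ladder move. -/
def invLadderResult (D : Finset (ℕ × ℕ)) (rem add : ℕ × ℕ) : Finset (ℕ × ℕ) :=
  insert add (D.erase rem)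

/-- One ladder move step. -/
def LadderStep (n : ℕ) (D D' : Finset (ℕ × ℕ)) : Prop :=
  ∃ rem add, LadderMovable n D rem add ∧ D' = ladderResult D rem add

/-- `D` is obtained from `D₀` by a (possibly empty) sequence of ladder moves. -/
def InLadderClosure (n : ℕ) (D₀ D : Finset (ℕ × ℕ)) : Prop :=
  Relation.ReflTransGen (LadderStep n) D₀ D

/-! ## The skew pipe dream `D(w)` -/

/-- The `k`-th box (`0`-based) in the enumeration
`((n,n), (n-1,n+1), (n-1,n), (n-1,n-1), …, (1,2n-1), …, (1,2), (1,1))` of `SY_n`. -/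
def boxOfIdx (n k : ℕ) : ℕ × ℕ :=
  let b := Nat.sqrt k + 1
  (n + 1 - b, n + b - 1 - (k - (b - 1) * (b - 1)))

/-- The letters of the subword of `i_C` at the (`0`-based) positions `ks`. -/
def subwordLetters (n : ℕ) (ks : List ℕ) : List ℕ := ks.map fun k => (iC n).getD k 0

/-- `ks` is an increasing list of positions in `i_C` whose subword is a reduced word for `w`. -/
noncomputable def IsSubwordIndices (n : ℕ) (w : ℤ → ℤ) (ks : List ℕ) : Prop :=
  ks.Chain' (· < ·) ∧ (∀ k ∈ ks, k < n ^ 2) ∧ ks.length = lenC n w ∧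
    wordProd (subwordLetters n ks) = w

/-- `ks = k_w` is the lexicographically minimal increasing list of positions of `i_C`
carrying a reduced word for `w`. -/
noncomputable def IsMinSubwordForW (n : ℕ) (w : ℤ → ℤ) (ks : List ℕ) : Prop :=
  IsSubwordIndices n w ks ∧ ∀ ks', IsSubwordIndices n w ks' → ¬ List.Lex (· < ·) ks' ks

/-- The skew pipe dream whose boxes are those of `SY_n` at positions **not** in `ks`;
for `ks = k_w` this is the skew pipe dream `D(w)`. -/
def Dskew (n : ℕ) (ks : List ℕ) : Finset (ℕ × ℕ) :=
  ((Finset.range (n ^ 2)).filter fun k => k ∉ ks).image (boxOfIdx n)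

/-! ## The pipe diagram `G(D)` and the signed permutation `w_D` -/

/-- A side of a box in the pipe diagram. -/
inductive PSide : Type
  | north | south | east | west
deriving DecidableEq

/-- The opposite side. -/
def oppSide : PSide → PSide
  | .north => .south
  | .south => .north
  | .east => .west
  | .west => .east

/-- Membership in the extended Gelfand–Tsetlin type diagram `SY_n^(ex)`:
column `j ≤ n` has rows `1, …, 2j` and column `n+1` has rows `1, …, 2n`. -/
def exMem (n : ℕ) (b : ℕ × ℕ) : Bool :=
  decide (1 ≤ b.1 ∧ 1 ≤ b.2 ∧ b.2 ≤ n + 1 ∧ b.1 ≤ min (2 * b.2) (2 * n))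

/-- The box `b` of the rearranged diagram `Ω(D)` is a crossing. -/
def isCross (n : ℕ) (D : Finset (ℕ × ℕ)) (b : ℕ × ℕ) : Bool :=
  decide (b.2 ≤ n) &&
    (if b.1 % 2 = 1 then decide (((b.1 + 1) / 2, b.2) ∈ D)
     else decide ((b.1 / 2, 2 * n + 1 - b.2) ∈ D))

/-- The empty box `b` is an elbow joint (as opposed to a reversed elbow joint). -/
def isElbow (n : ℕ) (b : ℕ × ℕ) : Bool :=
  decide ((b.2 ≤ n ∧ b.1 % 2 = 1) ∨ (b.2 = n + 1 ∧ b.1 % 2 = 0))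

/-- Given the side `s` from which a pipe enters the box `b`, the side from which it exits:
crossings go straight, elbows join `W–N` and `S–E`, reversed elbows join `N–E` and `W–S`. -/
def exitSide (n : ℕ) (D : Finset (ℕ × ℕ)) (b : ℕ × ℕ) (s : PSide) : PSide :=
  if isCross n D b then oppSide s
  else if isElbow n b then
    match s with
    | .west => .north
    | .north => .west
    | .south => .east
    | .east => .south
  else
    match s with
    | .north => .east
    | .east => .north
    | .west => .south
    | .south => .west

/-- The neighbouring box across the given side (rows increase downwards). -/
def stepBox (b : ℕ × ℕ) : PSide → ℕ × ℕ
  | .north => (b.1 - 1, b.2)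
  | .south => (b.1 + 1, b.2)
  | .east => (b.1, b.2 + 1)
  | .west => (b.1, b.2 - 1)

/-- Trace a pipe through the diagram: returns the list of visited boxes together with
the final box and the side from which the pipe leaves the diagram. -/
def tracePipe (n : ℕ) (D : Finset (ℕ × ℕ)) :
    ℕ → ℕ × ℕ → PSide → List (ℕ × ℕ) × ((ℕ × ℕ) × PSide)
  | 0, b, s => ([b], (b, exitSide n D b s))
  | fuel + 1, b, s =>
      let ex := exitSide n D b s
      let b' := stepBox b ex
      if exMem n b' then
        let r := tracePipe n D fuel b' (oppSide ex)
        (b :: r.1, r.2)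
      else ([b], (b, ex))

/-- The data of the pipe `ℓ_k` (for `1 ≤ k ≤ n`), entering the diagram from the west. -/
def pipeData (n : ℕ) (D : Finset (ℕ × ℕ)) (k : ℕ) : List (ℕ × ℕ) × ((ℕ × ℕ) × PSide) :=
  tracePipe n D (8 * (n + 2) * (n + 2)) (2 * (n - k) + 1, n - k + 1) PSide.west

/-- `v_D(k)`: the pipe `ℓ_k` exits at the top of the `(n + 1 - v_D(k))`-th column. -/
def vD (n : ℕ) (D : Finset (ℕ × ℕ)) (k : ℕ) : ℕ := n + 1 - ((pipeData n D k).2.1).2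

/-- The number of self-crossings of the pipe `ℓ_k`: the number of boxes it visits twice. -/
def selfCross (n : ℕ) (D : Finset (ℕ × ℕ)) (k : ℕ) : ℕ :=
  ((pipeData n D k).1.dedup.filter fun b => 2 ≤ (pipeData n D k).1.count b).length

/-- `v_D⁻¹(j)`. -/
def vDinv (n : ℕ) (D : Finset (ℕ × ℕ)) (j : ℕ) : ℕ :=
  ((((List.range n).map (· + 1)).find? fun k => vD n D k == j).getD 0)

/-- The signed permutation `w_D` read off from the pipe diagram `G(D)`:
`w_D(j) = (-1)^(sign(L_j)+1) · v_D⁻¹(j)`, where `sign(L_j)` is the number of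
self-crossings of the pipe `L_j = ℓ_{v_D⁻¹(j)}`. -/
def wD (n : ℕ) (D : Finset (ℕ × ℕ)) : ℤ → ℤ := fun x =>
  if 1 ≤ x.natAbs ∧ x.natAbs ≤ n then
    let k := vDinv n D x.natAbs
    let val : ℤ := (-1) ^ (selfCross n D k + 1) * (k : ℤ)
    if 0 < x then val else -val
  else x

/-- The set of reduced skew pipe dreams `D ⊆ SY_n` with `w_D = w`. -/
noncomputable def RSP (n : ℕ) (w : ℤ → ℤ) : Set (Finset (ℕ × ℕ)) :=
  {D | D ⊆ SY n ∧ D.card = n ^ 2 - lenC n (wD n D) ∧ wD n D = w}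

/-! ## Skew mitosis operators -/

/-- `b0` is the box `(p_{r₀}, q_{r₀})`: the index-maximal box of `SY_n` in the columns
`{n-j+1, n+j-1}` with `(p_{r₀}, q_{r₀}+1) ∉ D`. -/
def IsR0Box (n j : ℕ) (D : Finset (ℕ × ℕ)) (b0 : ℕ × ℕ) : Prop :=
  b0 ∈ SY n ∧ (b0.2 = n + 1 - j ∨ b0.2 = n + j - 1) ∧ (b0.1, b0.2 + 1) ∉ D ∧
    ∀ b ∈ SY n, (b.2 = n + 1 - j ∨ b.2 = n + j - 1) → (b.1, b.2 + 1) ∉ D → ¬ idxLt b0 b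

/-- The condition `(†)` under which the skew mitosis operators are nonempty, with `b0` the
removed box `(p_{r₀}, q_{r₀})`. -/
def MitosisDefined (n j : ℕ) (D : Finset (ℕ × ℕ)) (b0 : ℕ × ℕ) : Prop :=
  IsR0Box n j D b0 ∧
    ∀ b ∈ SY n, (b.2 = n + 1 - j ∨ b.2 = n + j - 1) → (idxLt b0 b ∨ b = b0) → b ∈ D

/-- A ladder move `L_{p,q}` with `q ∈ {n-j+1, n+j-1}`. -/
def ColLadderStep (n j : ℕ) (D D' : Finset (ℕ × ℕ)) : Prop :=
  ∃ rem add, (rem.2 = n + 1 - j ∨ rem.2 = n + j - 1) ∧ LadderMovable n D rem add ∧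
    D' = ladderResult D rem add

/-- A ladder move `L_{p,q}` with `q ∈ {n-j+1, n+j-1}` and `p < m`. -/
def ColLadderStepLt (n j m : ℕ) (D D' : Finset (ℕ × ℕ)) : Prop :=
  ∃ rem add, (rem.2 = n + 1 - j ∨ rem.2 = n + j - 1) ∧ rem.1 < m ∧
    LadderMovable n D rem add ∧ D' = ladderResult D rem add

/-- The skew mitosis-type operator `M_j`. -/
def Mset (n j : ℕ) (D : Finset (ℕ × ℕ)) : Set (Finset (ℕ × ℕ)) :=
  {E | ∃ b0, MitosisDefined n j D b0 ∧
    Relation.ReflTransGen (ColLadderStep n j) (D.erase b0) E}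

/-- `start_j^⊤(D)`. -/
noncomputable def startT (n j : ℕ) (D : Finset (ℕ × ℕ)) : ℕ :=
  sInf ({p | (p, n + 1 - j) ∈ SY n ∧ (p, n + 1 - j) ∉ D} ∪
        {q | ∃ p, q = p + 1 ∧ (p, n + j - 1) ∈ SY n ∧ (p, n + j - 1) ∉ D} ∪
        {n + 2 - j})

/-- The transposed skew mitosis operator `mitosis_j^⊤`. -/
noncomputable def mitosisT (n j : ℕ) (D : Finset (ℕ × ℕ)) : Set (Finset (ℕ × ℕ)) :=
  {E | ∃ b0, MitosisDefined n j D b0 ∧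
    Relation.ReflTransGen (ColLadderStepLt n j (startT n j D)) (D.erase b0) E}

/-! ## Generating functions -/

/-- `d(x, D)` for the fixed index `j`. -/
def dX (n j : ℕ) (D : Finset (ℕ × ℕ)) : ℕ :=
  (D.filter fun b => b.2 = n + 1 - j ∨ b.2 = n + j - 1).card

/-- `d(y, D)` for the fixed index `j`. -/
def dY (n j : ℕ) (D : Finset (ℕ × ℕ)) : ℕ :=
  (D.filter fun b => b.1 ≤ n + 1 - j ∧ (b.2 = n + 2 - j ∨ b.2 = n + j)).card

/-- The ladder-move closure `L(D₀)` of `D₀` as a finite set. -/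
noncomputable def LSet (n : ℕ) (ks : List ℕ) : Finset (Finset (ℕ × ℕ)) :=
  (SY n).powerset.filter fun D => InLadderClosure n (Dskew n ks) D

/-- The generating function `F(x,y) = Σ_{D ∈ L(D(w))} x^{d(x,D)} y^{d(y,D)}`
as a polynomial in `ℤ[x,y] = MvPolynomial (Fin 2) ℤ`. -/
noncomputable def Fpoly (n j : ℕ) (ks : List ℕ) : MvPolynomial (Fin 2) ℤ :=
  ∑ D ∈ LSet n ks, (MvPolynomial.X 0) ^ dX n j D * (MvPolynomial.X 1) ^ dY n j D

/-- The set `mitosis_j^⊤(L(D(w)))` as a finite set. -/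
noncomputable def MitUnion (n j : ℕ) (ks : List ℕ) : Finset (Finset (ℕ × ℕ)) :=
  (SY n).powerset.filter fun E =>
    ∃ D, InLadderClosure n (Dskew n ks) D ∧ E ∈ mitosisT n j D

/-! The added box `(p, q+1)` lies after the removed box `rem = (i, j)`, and since `q ∈ {j, 2n-j}`
the inverse move from `(p, q+1)` scans the column pair `{q, 2n-q} = {j, 2n-j}`, i.e. exactly the
boxes strictly between `rem` and `(p, q)` that the ladder move required to be full, together with
their right neighbours; none of these is `rem` or `(p, q+1)`, so the move leaves them full. The
endpoint conditions of `L⁻¹` are those of `L` read backwards. -/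

theorem mem_SY_iff {n : ℕ} {b : ℕ × ℕ} :
    b ∈ SY n ↔ 1 ≤ b.1 ∧ b.1 ≤ n ∧ 1 ≤ b.2 ∧ b.2 ≤ 2 * n ∧ b.1 ≤ b.2 ∧ b.1 + b.2 ≤ 2 * n := by
  simp only [SY, Finset.mem_filter, Finset.mem_product, Finset.mem_Icc]
  tauto

theorem idxLt.ne {a b : ℕ × ℕ} (h : idxLt a b) : a ≠ b := by
  rintro rfl
  unfold idxLt at h
  omega

theorem idxLt.of_succ_snd {a b : ℕ × ℕ} (h : idxLt a (b.1, b.2 + 1)) : idxLt a b := by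
  unfold idxLt at *
  omega

/-- In the row of `a` only the column `2n - a.2 < a.2` can hold `b`, and then
`2n - a.2 + 1 < a.2` by parity. -/
theorem idxLt_succ_snd_of_mem_columns {n : ℕ} {a b : ℕ × ℕ} (ha : a.2 ≤ 2 * n) (h : idxLt a b)
    (hcol : b.2 = a.2 ∨ b.2 = 2 * n - a.2) : idxLt a (b.1, b.2 + 1) := by
  unfold idxLt at *
  omega

theorem inv_columns_iff {n q q' : ℕ} (hq : q ≤ 2 * n) (hq' : q' + 1 ≤ 2 * n)
    (hcol : q' = q ∨ q' = 2 * n - q) (c : ℕ) :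
    (c = q' + 1 - 1 ∨ c = 2 * n - (q' + 1) + 1) ↔ (c = q ∨ c = 2 * n - q) := by
  omega

theorem mem_ladderResult {D : Finset (ℕ × ℕ)} {rem add b : ℕ × ℕ} :
    b ∈ ladderResult D rem add ↔ b = (add.1, add.2 + 1) ∨ (b ≠ rem ∧ b ∈ D) := by
  simp only [ladderResult, Finset.mem_insert, Finset.mem_erase]

theorem invLadderResult_ladderResult {D : Finset (ℕ × ℕ)} {rem add : ℕ × ℕ} (hrem : rem ∈ D)
    (hadd : (add.1, add.2 + 1) ∉ D) :
    invLadderResult (ladderResult D rem add) (add.1, add.2 + 1) rem = D := by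
  rw [invLadderResult, ladderResult,
    Finset.erase_insert (fun h => hadd (Finset.mem_of_mem_erase h)), Finset.insert_erase hrem]

theorem LadderMovable.invLadderMovable {n : ℕ} {D : Finset (ℕ × ℕ)} {rem add : ℕ × ℕ}
    (hremSY : rem ∈ SY n) (h : LadderMovable n D rem add) :
    InvLadderMovable n (ladderResult D rem add) (add.1, add.2 + 1) rem := by
  obtain ⟨-, hremR, -, haddRSY, hadd, -, hlt, hcol, hfull⟩ := h
  have hremCol := (mem_SY_iff.mp hremSY).2.2.2.1
  have hcols := inv_columns_iff hremCol (mem_SY_iff.mp haddRSY).2.2.2.1 hcol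
  have hltR : idxLt rem (add.1, add.2 + 1) := idxLt_succ_snd_of_mem_columns hremCol hlt hcol
  refine ⟨mem_ladderResult.mpr (Or.inl rfl), ?_, hremSY, ?_, ?_, hltR, (hcols _).mpr (Or.inl rfl),
    ?_⟩
  · rw [Nat.add_sub_cancel, mem_ladderResult, not_or]
    exact ⟨fun h => by simpa using congrArg Prod.snd h, fun h => hadd h.2⟩
  · rw [mem_ladderResult, not_or]
    exact ⟨hltR.ne, fun h => h.1 rfl⟩
  · rw [mem_ladderResult, not_or, Prod.mk.injEq]
    exact ⟨fun h => hlt.ne (Prod.ext h.1 (by omega)), fun h => hremR h.2⟩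
  · intro r hrSY hremr hrR hrcol
    replace hrcol := (hcols _).mp hrcol
    have hr := hfull r hrSY hremr hrR.of_succ_snd hrcol
    refine ⟨mem_ladderResult.mpr (Or.inr ⟨hremr.ne.symm, hr.1⟩),
      mem_ladderResult.mpr (Or.inr ⟨fun h => ?_, hr.2⟩)⟩
    subst h
    dsimp only at hrcol
    -- `r.2 ∈ {r.2 + 1, 2n - (r.2 + 1)}` is impossible by parity
    omega

/-- If the ladder move `L_{rem}` is defined on `D ⊆ SY_n` with
`L_{rem}(D) = D ∪ {(p, q+1)} ∖ {rem}` (where `add = (p,q)`), then the inverse ladder move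
`L⁻¹_{(p,q+1)}` is defined on `L_{rem}(D)` and `L⁻¹_{(p,q+1)}(L_{rem}(D)) = D`. -/
theorem ladder_inverse (n : ℕ) (D : Finset (ℕ × ℕ)) (hD : D ⊆ SY n) (rem add : ℕ × ℕ)
    (h : LadderMovable n D rem add) :
    InvLadderMovable n (ladderResult D rem add) (add.1, add.2 + 1) rem ∧
      invLadderResult (ladderResult D rem add) (add.1, add.2 + 1) rem = D := by
  obtain ⟨hrem, -, -, -, -, haddR, -⟩ := id h
  exact ⟨h.invLadderMovable (hD hrem), invLadderResult_ladderResult hrem haddR⟩
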